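/- For every σ > 0 and every real λ, ∫_{−∞}^{λ} (Q(s) − Q(λ))·e^{σ s} ds = Q(σ − λ)/(φ(σ)·σ·√(2π)), where Q is the Gaussian Q-function and φ the standard Gaussian density. -/

import Mathlib

open MeasureTheory Real Set

/-- The standard Gaussian density `φ(x) = (1/√(2π))·exp(−x²/2)`. -/
noncomputable def gaussPDF (x : ℝ) : ℝ := (Real.sqrt (2 * Real.pi))⁻¹ * Real.exp (-x ^ 2 / 2)

/-- The Gaussian Q-function `Q(τ) = ∫_τ^∞ φ(x) dx`. -/
noncomputable def gaussQ (τ : ℝ) : ℝ := ∫ x in Set.Ioi τ, gaussPDF x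

/-- The Gaussian Mills ratio `R(τ) = Q(τ)/φ(τ)`. -/
noncomputable def millsR (τ : ℝ) : ℝ := gaussQ τ / gaussPDF τ

open Filter Topology

/-! `s ↦ (Q(s) − Q(λ))·e^{σs}/σ − (e^{σ²/2}/σ)·Q(s − σ)` is a primitive of the integrand, because
completing the square turns `φ(s)·e^{σs}` into `e^{σ²/2}·φ(s − σ)`. It tends to `−e^{σ²/2}/σ` at
`−∞`, so the integral equals `(e^{σ²/2}/σ)·(1 − Q(λ − σ)) = (e^{σ²/2}/σ)·Q(σ − λ)`, and
`φ(σ)·√(2π) = e^{−σ²/2}`. -/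

section TailIntegral

variable {f : ℝ → ℝ}

theorem hasDerivAt_integral_Ioi (hf : Integrable f) (hc : Continuous f) (τ : ℝ) :
    HasDerivAt (fun t => ∫ x in Ioi t, f x) (-f τ) τ := by
  have hsplit : (fun t => ∫ x in Ioi t, f x) = fun t => (∫ x in t..0, f x) + ∫ x in Ioi 0, f x :=
    funext fun t => (intervalIntegral.integral_interval_add_Ioi hf.integrableOn hf.integrableOn).symm
  rw [hsplit]
  exact (intervalIntegral.integral_hasDerivAt_left hf.intervalIntegrable
    (hc.stronglyMeasurableAtFilter _ _) hc.continuousAt).add_const _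

theorem tendsto_integral_Ioi_atBot (hf : Integrable f) :
    Tendsto (fun t => ∫ x in Ioi t, f x) atBot (𝓝 (∫ x, f x)) :=
  (aecover_Ioi tendsto_id).integral_tendsto_of_countably_generated hf

end TailIntegral

theorem gaussPDF_eq_gaussianPDFReal : gaussPDF = ProbabilityTheory.gaussianPDFReal 0 1 := by
  ext x
  simp [gaussPDF, ProbabilityTheory.gaussianPDFReal]

theorem continuous_gaussPDF : Continuous gaussPDF := by
  unfold gaussPDF
  fun_prop

theorem integrable_gaussPDF : Integrable gaussPDF :=
  gaussPDF_eq_gaussianPDFReal ▸ ProbabilityTheory.integrable_gaussianPDFReal 0 1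

theorem integral_gaussPDF : ∫ x, gaussPDF x = 1 :=
  gaussPDF_eq_gaussianPDFReal ▸ ProbabilityTheory.integral_gaussianPDFReal_eq_one 0 one_ne_zero

theorem gaussPDF_neg (x : ℝ) : gaussPDF (-x) = gaussPDF x := by
  simp [gaussPDF]

theorem gaussPDF_mul_sqrt_two_pi (x : ℝ) : gaussPDF x * √(2 * π) = exp (-x ^ 2 / 2) := by
  unfold gaussPDF
  field_simp

theorem gaussPDF_mul_exp (σ x : ℝ) :
    gaussPDF x * exp (σ * x) = exp (σ ^ 2 / 2) * gaussPDF (x - σ) := by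
  unfold gaussPDF
  rw [mul_assoc, ← exp_add, mul_left_comm, ← exp_add]
  ring_nf

theorem hasDerivAt_gaussQ (τ : ℝ) : HasDerivAt gaussQ (-gaussPDF τ) τ :=
  hasDerivAt_integral_Ioi integrable_gaussPDF continuous_gaussPDF τ

theorem continuous_gaussQ : Continuous gaussQ :=
  continuous_iff_continuousAt.2 fun τ => (hasDerivAt_gaussQ τ).continuousAt

theorem tendsto_gaussQ_atBot : Tendsto gaussQ atBot (𝓝 1) :=
  integral_gaussPDF ▸ tendsto_integral_Ioi_atBot integrable_gaussPDF

theorem gaussQ_neg (t : ℝ) : gaussQ (-t) = 1 - gaussQ t := by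
  have hreflect : gaussQ (-t) = ∫ x in Iic t, gaussPDF x := by
    rw [gaussQ]
    simpa [gaussPDF_neg] using integral_comp_neg_Ioi (-t) gaussPDF
  rw [hreflect, ← integral_gaussPDF, ← intervalIntegral.integral_Iic_add_Ioi
    integrable_gaussPDF.integrableOn integrable_gaussPDF.integrableOn, gaussQ, add_sub_cancel_right]

theorem gaussQ_nonneg (τ : ℝ) : 0 ≤ gaussQ τ :=
  setIntegral_nonneg measurableSet_Ioi fun x _ => by unfold gaussPDF; positivity

theorem gaussQ_le_one (τ : ℝ) : gaussQ τ ≤ 1 := by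
  have := gaussQ_neg (-τ)
  rw [neg_neg] at this
  linarith [gaussQ_nonneg (-τ)]

theorem integrableOn_gaussQ_sub_mul_exp {σ : ℝ} (hσ : 0 < σ) (l c : ℝ) :
    IntegrableOn (fun s => (gaussQ s - gaussQ l) * exp (σ * s)) (Iic c) := by
  refine (integrableOn_exp_mul_Iic hσ c).mono' ?_ (Eventually.of_forall fun s => ?_)
  · exact ((continuous_gaussQ.sub continuous_const).mul (by fun_prop)).aestronglyMeasurable
  · rw [norm_mul, norm_of_nonneg (exp_pos _).le]
    have : |gaussQ s - gaussQ l| ≤ 1 := abs_sub_le_of_nonneg_of_le (gaussQ_nonneg s)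
      (gaussQ_le_one s) (gaussQ_nonneg l) (gaussQ_le_one l)
    exact mul_le_of_le_one_left (exp_pos _).le this

noncomputable def gaussQExpPrimitive (σ l s : ℝ) : ℝ :=
  (gaussQ s - gaussQ l) * (exp (σ * s) / σ) - exp (σ ^ 2 / 2) / σ * gaussQ (s - σ)

theorem hasDerivAt_gaussQExpPrimitive {σ : ℝ} (hσ : σ ≠ 0) (l s : ℝ) :
    HasDerivAt (gaussQExpPrimitive σ l) ((gaussQ s - gaussQ l) * exp (σ * s)) s := by
  have hexp : HasDerivAt (fun s => exp (σ * s) / σ) (exp (σ * s)) s := by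
    refine (((hasDerivAt_id s).const_mul σ).exp.div_const σ).congr_deriv ?_
    rw [mul_one, mul_div_cancel_right₀ _ hσ, id]
  have hshift : HasDerivAt (fun s => gaussQ (s - σ)) (-gaussPDF (s - σ)) s := by
    simpa using (hasDerivAt_gaussQ (s - σ)).comp_sub_const s σ
  refine ((((hasDerivAt_gaussQ s).sub_const (gaussQ l)).mul hexp).sub
    (hshift.const_mul (exp (σ ^ 2 / 2) / σ))).congr_deriv ?_
  linear_combination -gaussPDF_mul_exp σ s / σ

theorem tendsto_gaussQExpPrimitive_atBot {σ : ℝ} (hσ : 0 < σ) (l : ℝ) :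
    Tendsto (gaussQExpPrimitive σ l) atBot (𝓝 (-(exp (σ ^ 2 / 2) / σ))) := by
  have hexp : Tendsto (fun s => exp (σ * s) / σ) atBot (𝓝 0) := by
    simpa using (tendsto_exp_atBot.comp (tendsto_id.const_mul_atBot hσ)).div_const σ
  have hshift : Tendsto (fun s => gaussQ (s - σ)) atBot (𝓝 1) :=
    tendsto_gaussQ_atBot.comp (tendsto_atBot_add_const_right _ (-σ) tendsto_id)
  unfold gaussQExpPrimitive
  simpa using ((tendsto_gaussQ_atBot.sub_const (gaussQ l)).mul hexp).sub
    (hshift.const_mul (exp (σ ^ 2 / 2) / σ))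

/-- For every `σ > 0` and real `λ`,
`∫_{−∞}^{λ} (Q(s) − Q(λ))·e^{σ s} ds = Q(σ − λ)/(φ(σ)·σ·√(2π))`. -/
theorem gaussian_spectral_integral_identity (σ l : ℝ) (hσ : 0 < σ) :
    ∫ s in Set.Iio l, (gaussQ s - gaussQ l) * Real.exp (σ * s)
      = gaussQ (σ - l) / (gaussPDF σ * σ * Real.sqrt (2 * Real.pi)) := by
  rw [← integral_Iic_eq_integral_Iio, integral_Iic_of_hasDerivAt_of_tendsto'
    (fun s _ => hasDerivAt_gaussQExpPrimitive hσ.ne' l s) (integrableOn_gaussQ_sub_mul_exp hσ l l)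
    (tendsto_gaussQExpPrimitive_atBot hσ l)]
  have hQ : gaussQ (σ - l) = 1 - gaussQ (l - σ) := by rw [← gaussQ_neg, neg_sub]
  have hφ : gaussPDF σ * σ * √(2 * π) = σ / exp (σ ^ 2 / 2) := by
    rw [mul_right_comm, gaussPDF_mul_sqrt_two_pi, neg_div, exp_neg, inv_mul_eq_div]
  rw [hφ, hQ, gaussQExpPrimitive]
  field_simp
  ring
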